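/- Let Z₁,…,Zₙ be independent finite random variables where Zₖ has distribution pₖ on a finite set S, and let cₖ : S → ℝ be positive weight functions. Then log E[ c₁(Z₁) / ∑_{k=1}^n cₖ(Zₖ) ] ≥ E[log c₁(Z₁)] − log( ∑_{k=1}^n E[cₖ(Zₖ)] ). (The ELBO is a lower bound on the log-likelihood for the Cox mixture of experts.) -/

import Mathlib

/-! Jensen's inequality for the concave `log`, applied under the product weight `∏ k, p k (z k)`
twice: once to the ratio `c₀ / ∑ₖ cₖ` and once to the denominator. The expectations that remain
involve single coordinates only, so they reduce to sums against the marginals `pₖ`. -/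

open Finset Real

section ProductWeights

variable {ι S R : Type*} [Fintype ι] [DecidableEq ι] [Fintype S] [CommSemiring R]

theorem sum_pi_prod_eq_one (p : ι → S → R) (hp : ∀ j, ∑ s, p j s = 1) :
    ∑ z : ι → S, ∏ j, p j (z j) = 1 := by
  rw [← Fintype.prod_sum]
  exact prod_eq_one fun j _ => hp j

theorem sum_pi_prod_mul_eval_eq (p : ι → S → R) (k : ι) (hp : ∀ j ≠ k, ∑ s, p j s = 1)
    (g : S → R) :
    ∑ z : ι → S, (∏ j, p j (z j)) * g (z k) = ∑ s, p k s * g s := by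
  set f : ι → S → R := fun j s => p j s * if j = k then g s else 1
  have hf : ∀ z : ι → S, (∏ j, p j (z j)) * g (z k) = ∏ j, f j (z j) := by
    intro z
    rw [prod_mul_distrib, Fintype.prod_ite_eq']
  calc ∑ z : ι → S, (∏ j, p j (z j)) * g (z k) = ∏ j, ∑ s, f j s := by
        simp_rw [hf, Fintype.prod_sum]
    _ = ∑ s, p k s * g s := by
        rw [Fintype.prod_eq_single k fun j hj => by simp [f, hj, hp j hj]]
        simp [f]

theorem sum_pi_prod_mul_sum_eval_eq (p : ι → S → R) (hp : ∀ j, ∑ s, p j s = 1)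
    (c : ι → S → R) :
    ∑ z : ι → S, (∏ j, p j (z j)) * ∑ k, c k (z k) = ∑ k, ∑ s, p k s * c k s := by
  simp_rw [mul_sum]
  rw [sum_comm]
  exact sum_congr rfl fun k _ => sum_pi_prod_mul_eval_eq p k (fun j _ => hp j) (c k)

end ProductWeights

section Jensen

variable {ι : Type*} (t : Finset ι) {w : ι → ℝ}

theorem sum_mul_log_le_log_sum_mul (hw₀ : ∀ i ∈ t, 0 ≤ w i) (hw₁ : ∑ i ∈ t, w i = 1)
    {x : ι → ℝ} (hx : ∀ i ∈ t, 0 < x i) :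
    ∑ i ∈ t, w i * log (x i) ≤ log (∑ i ∈ t, w i * x i) := by
  simpa only [smul_eq_mul] using strictConcaveOn_log_Ioi.concaveOn.le_map_sum hw₀ hw₁ hx

theorem sum_mul_log_sub_log_sum_mul_le_log_sum_mul_div (hw₀ : ∀ i ∈ t, 0 ≤ w i)
    (hw₁ : ∑ i ∈ t, w i = 1) {a b : ι → ℝ} (ha : ∀ i ∈ t, 0 < a i) (hb : ∀ i ∈ t, 0 < b i) :
    ∑ i ∈ t, w i * log (a i) - log (∑ i ∈ t, w i * b i) ≤
      log (∑ i ∈ t, w i * (a i / b i)) :=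
  calc ∑ i ∈ t, w i * log (a i) - log (∑ i ∈ t, w i * b i)
      ≤ ∑ i ∈ t, w i * log (a i) - ∑ i ∈ t, w i * log (b i) :=
        sub_le_sub_left (sum_mul_log_le_log_sum_mul t hw₀ hw₁ hb) _
    _ = ∑ i ∈ t, w i * log (a i / b i) := by
        rw [← sum_sub_distrib]
        refine sum_congr rfl fun i hi => ?_
        rw [log_div (ha i hi).ne' (hb i hi).ne', mul_sub]
    _ ≤ log (∑ i ∈ t, w i * (a i / b i)) :=
        sum_mul_log_le_log_sum_mul t hw₀ hw₁ fun i hi => div_pos (ha i hi) (hb i hi)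

end Jensen

theorem elbo_lower_bounds_log_likelihood_general
    (n : ℕ) [NeZero n] (S : Type*) [Fintype S]
    (p : Fin n → S → ℝ) (c : Fin n → S → ℝ)
    (hp : ∀ k s, 0 < p k s) (hpsum : ∀ k, ∑ s, p k s = 1)
    (hc : ∀ k s, 0 < c k s) :
    Real.log (∑ z : Fin n → S,
        (∏ k, p k (z k)) * (c 0 (z 0) / ∑ k, c k (z k))) ≥
      (∑ s, p 0 s * Real.log (c 0 s)) -
        Real.log (∑ k, ∑ s, p k s * c k s) := by
  have key := sum_mul_log_sub_log_sum_mul_le_log_sum_mul_div univ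
    (fun z _ => prod_nonneg fun k _ => (hp k (z k)).le) (sum_pi_prod_eq_one p hpsum)
    (a := fun z => c 0 (z 0)) (b := fun z => ∑ k, c k (z k))
    (fun z _ => hc 0 (z 0)) (fun z _ => sum_pos (fun k _ => hc k (z k)) univ_nonempty)
  rwa [sum_pi_prod_mul_eval_eq p 0 (fun j _ => hpsum j) (fun s => log (c 0 s)),
    sum_pi_prod_mul_sum_eval_eq p hpsum] at key

theorem elbo_lower_bounds_log_likelihood
    (n : ℕ) [NeZero n] (S : Type*) [Fintype S] [Nonempty S]
    (p : Fin n → S → ℝ) (c : Fin n → S → ℝ)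
    (hp : ∀ k s, 0 < p k s) (hpsum : ∀ k, ∑ s, p k s = 1)
    (hc : ∀ k s, 0 < c k s) :
    Real.log (∑ z : Fin n → S,
        (∏ k, p k (z k)) * (c 0 (z 0) / ∑ k, c k (z k))) ≥
      (∑ s, p 0 s * Real.log (c 0 s)) -
        Real.log (∑ k, ∑ s, p k s * c k s) :=
  elbo_lower_bounds_log_likelihood_general n S p c hp hpsum hc
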